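/- arXiv:1403.5720 — 7 statements merged into one kernel-verified Lean document; each statement's English description precedes it below -/
import Mathlib

section
/- Let U and V be unitary matrices on ℂ^{n} ⊗ ℂ^{m}, and suppose U = (C_1 ⊗ C_2) V (D_1 ⊗ D_2), where C_1, C_2, D_1, D_2 are diagonal matrices with strictly positive diagonal entries. Then U = V; that is, V = (C_1 ⊗ C_2) V (D_1 ⊗ D_2), which implies that for every matrix entry (j,k) with V_{jk} ≠ 0 the corresponding diagonal products satisfy (C_1⊗C_2)_{jj} (D_1⊗D_2)_{kk} = 1, and consequently V = (√(C_1) ⊗ √(C_2)) V (√(D_1) ⊗ √(D_2)). -/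
open Matrix Kronecker

private lemma aux_amgm {t : ℝ} (ht : 0 < t) : 0 ≤ t + t⁻¹ - 2 := by
  have h : t + t⁻¹ - 2 = (t - 1)^2 / t := by field_simp; ring
  rw [h]; positivity

private lemma aux_amgm_eq {t : ℝ} (ht : 0 < t) (h0 : t + t⁻¹ - 2 = 0) : t = 1 := by
  have h : t + t⁻¹ - 2 = (t - 1)^2 / t := by field_simp; ring
  rw [h] at h0
  have : (t - 1)^2 = 0 := by
    field_simp at h0; nlinarith
  nlinarith [sq_nonneg (t-1)]

private lemma aux_inv1 {a : ℝ} (ha : a ≠ 0) : a ^ 2 * (a⁻¹ * a⁻¹) = 1 := by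
  rw [show a⁻¹ * a⁻¹ = (a ^ 2)⁻¹ by rw [sq, mul_inv], mul_inv_cancel₀ (pow_ne_zero 2 ha)]

private lemma aux_inv2 {a : ℝ} (ha : a ≠ 0) : (a ^ 2)⁻¹ * (a * a) = 1 := by
  rw [show a * a = a ^ 2 from (sq a).symm, inv_mul_cancel₀ (pow_ne_zero 2 ha)]

theorem stmt_4 (n m : ℕ)
    (U V : Matrix (Fin n × Fin m) (Fin n × Fin m) ℂ)
    (hU : U ∈ Matrix.unitaryGroup (Fin n × Fin m) ℂ)
    (hV : V ∈ Matrix.unitaryGroup (Fin n × Fin m) ℂ)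
    (c₁ d₁ : Fin n → ℝ) (c₂ d₂ : Fin m → ℝ)
    (hc₁ : ∀ i, 0 < c₁ i) (hd₁ : ∀ i, 0 < d₁ i)
    (hc₂ : ∀ i, 0 < c₂ i) (hd₂ : ∀ i, 0 < d₂ i)
    (h : U = (Matrix.diagonal (fun i => (c₁ i : ℂ)) ⊗ₖ Matrix.diagonal (fun i => (c₂ i : ℂ)))
          * V *
          (Matrix.diagonal (fun i => (d₁ i : ℂ)) ⊗ₖ Matrix.diagonal (fun i => (d₂ i : ℂ)))) :
    (∀ j k, V j k ≠ 0 → (c₁ j.1 * c₂ j.2) * (d₁ k.1 * d₂ k.2) = 1) ∧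
    V = (Matrix.diagonal (fun i => ((Real.sqrt (c₁ i) : ℝ) : ℂ))
          ⊗ₖ Matrix.diagonal (fun i => ((Real.sqrt (c₂ i) : ℝ) : ℂ)))
        * V *
        (Matrix.diagonal (fun i => ((Real.sqrt (d₁ i) : ℝ) : ℂ))
          ⊗ₖ Matrix.diagonal (fun i => ((Real.sqrt (d₂ i) : ℝ) : ℂ))) ∧
    U = V := by
  classical
  set p : Fin n × Fin m → ℝ := fun j => c₁ j.1 * c₂ j.2 with hpdef
  set q : Fin n × Fin m → ℝ := fun k => d₁ k.1 * d₂ k.2 with hqdef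
  have hppos : ∀ j, 0 < p j := fun j => mul_pos (hc₁ _) (hc₂ _)
  have hqpos : ∀ k, 0 < q k := fun k => mul_pos (hd₁ _) (hd₂ _)
  set Pd : Matrix (Fin n × Fin m) (Fin n × Fin m) ℂ :=
    Matrix.diagonal (fun j => ((p j : ℝ) : ℂ)) with hPddef
  set Qd : Matrix (Fin n × Fin m) (Fin n × Fin m) ℂ :=
    Matrix.diagonal (fun k => ((q k : ℝ) : ℂ)) with hQddef
  set Pi' : Matrix (Fin n × Fin m) (Fin n × Fin m) ℂ :=
    Matrix.diagonal (fun j => (((p j : ℝ) : ℂ))⁻¹) with hPidef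
  set Qi : Matrix (Fin n × Fin m) (Fin n × Fin m) ℂ :=
    Matrix.diagonal (fun k => (((q k : ℝ) : ℂ))⁻¹) with hQidef
  have hpne : ∀ j, ((p j : ℝ) : ℂ) ≠ 0 := fun j => by
    exact_mod_cast Complex.ofReal_ne_zero.mpr (hppos j).ne'
  have hqne : ∀ k, ((q k : ℝ) : ℂ) ≠ 0 := fun k => by
    exact_mod_cast Complex.ofReal_ne_zero.mpr (hqpos k).ne'
  have diag_eq : ∀ f g : (Fin n × Fin m) → ℂ, (∀ i, f i = g i) →
      Matrix.diagonal f = Matrix.diagonal g := fun f g hfg => by rw [funext hfg]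
  have hceq : (Matrix.diagonal fun mn : Fin n × Fin m => (c₁ mn.1 : ℂ) * (c₂ mn.2 : ℂ)) = Pd := by
    rw [hPddef]
    exact diag_eq _ _ (fun i => by simp only [hpdef]; push_cast; ring)
  have hdeq : (Matrix.diagonal fun mn : Fin n × Fin m => (d₁ mn.1 : ℂ) * (d₂ mn.2 : ℂ)) = Qd := by
    rw [hQddef]
    exact diag_eq _ _ (fun i => by simp only [hqdef]; push_cast; ring)
  have hUP : U = Pd * V * Qd := by
    rw [h, Matrix.diagonal_kronecker_diagonal, Matrix.diagonal_kronecker_diagonal, hceq, hdeq]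
  have hstarPd : star Pd = Pd := by
    rw [Matrix.star_eq_conjTranspose, hPddef, Matrix.diagonal_conjTranspose]
    exact diag_eq _ _ (fun i => by simp [Pi.star_apply, Complex.star_def, Complex.conj_ofReal])
  have hstarQd : star Qd = Qd := by
    rw [Matrix.star_eq_conjTranspose, hQddef, Matrix.diagonal_conjTranspose]
    exact diag_eq _ _ (fun i => by simp [Pi.star_apply, Complex.star_def, Complex.conj_ofReal])
  have hPiPd : Pi' * Pd = 1 := by
    rw [hPidef, hPddef, Matrix.diagonal_mul_diagonal]
    rw [show (fun i => (((p i : ℝ) : ℂ))⁻¹ * ((p i : ℝ) : ℂ)) = fun _ => (1:ℂ) from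
      funext fun i => inv_mul_cancel₀ (hpne i)]
    exact Matrix.diagonal_one
  have hPdPi : Pd * Pi' = 1 := by
    rw [hPddef, hPidef, Matrix.diagonal_mul_diagonal]
    rw [show (fun i => ((p i : ℝ) : ℂ) * (((p i : ℝ) : ℂ))⁻¹) = fun _ => (1:ℂ) from
      funext fun i => mul_inv_cancel₀ (hpne i)]
    exact Matrix.diagonal_one
  have hQdQi : Qd * Qi = 1 := by
    rw [hQddef, hQidef, Matrix.diagonal_mul_diagonal]
    rw [show (fun i => ((q i : ℝ) : ℂ) * (((q i : ℝ) : ℂ))⁻¹) = fun _ => (1:ℂ) from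
      funext fun i => mul_inv_cancel₀ (hqne i)]
    exact Matrix.diagonal_one
  have hV1 : V * star V = 1 := Matrix.mem_unitaryGroup_iff.mp hV
  have hV2 : star V * V = 1 := Matrix.mem_unitaryGroup_iff'.mp hV
  have hU1 : (Pd * V * Qd) * (Qd * star V * Pd) = 1 := by
    have h1 := Matrix.mem_unitaryGroup_iff.mp hU
    rw [hUP] at h1
    have h2 : star (Pd * V * Qd) = Qd * star V * Pd := by
      rw [Matrix.star_mul, Matrix.star_mul, hstarPd, hstarQd]
      simp [Matrix.mul_assoc]
    rwa [h2] at h1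
  -- M1 : V * (Qd*Qd) * star V = Pi' * Pi'
  have hcore : Pd * (V * (Qd * Qd) * star V) * Pd = 1 := by
    calc Pd * (V * (Qd * Qd) * star V) * Pd
        = (Pd * V * Qd) * (Qd * star V * Pd) := by
          simp only [Matrix.mul_assoc]
      _ = 1 := hU1
  have M1 : V * (Qd * Qd) * star V = Pi' * Pi' := by
    calc V * (Qd * Qd) * star V
        = (Pi' * Pd) * (V * (Qd * Qd) * star V) * (Pd * Pi') := by
          rw [hPiPd, hPdPi, Matrix.one_mul, Matrix.mul_one]
      _ = Pi' * (Pd * (V * (Qd * Qd) * star V) * Pd) * Pi' := by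
          simp only [Matrix.mul_assoc]
      _ = Pi' * Pi' := by rw [hcore, Matrix.mul_one]
  have hXY : (V * (Qd * Qd) * star V) * (V * (Qi * Qi) * star V) = 1 := by
    calc (V * (Qd * Qd) * star V) * (V * (Qi * Qi) * star V)
        = V * (Qd * (Qd * ((star V * V) * (Qi * (Qi * star V))))) := by
          simp only [Matrix.mul_assoc]
      _ = V * (Qd * (Qd * (Qi * (Qi * star V)))) := by rw [hV2, Matrix.one_mul]
      _ = V * (Qd * ((Qd * Qi) * (Qi * star V))) := by simp only [Matrix.mul_assoc]
      _ = V * (Qd * (Qi * star V)) := by rw [hQdQi, Matrix.one_mul]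
      _ = V * ((Qd * Qi) * star V) := by simp only [Matrix.mul_assoc]
      _ = V * star V := by rw [hQdQi, Matrix.one_mul]
      _ = 1 := hV1
  have hPdPdPiPi : (Pd * Pd) * (Pi' * Pi') = 1 := by
    have h0 : (Pd * Pd) * (Pi' * Pi') = Pd * (Pd * Pi') * Pi' := by simp only [Matrix.mul_assoc]
    rw [h0, hPdPi, Matrix.mul_one, hPdPi]
  have M2 : V * (Qi * Qi) * star V = Pd * Pd := by
    calc V * (Qi * Qi) * star V
        = ((Pd * Pd) * (Pi' * Pi')) * (V * (Qi * Qi) * star V) := by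
          rw [hPdPdPiPi, Matrix.one_mul]
      _ = (Pd * Pd) * ((Pi' * Pi') * (V * (Qi * Qi) * star V)) := by
          simp only [Matrix.mul_assoc]
      _ = (Pd * Pd) * ((V * (Qd * Qd) * star V) * (V * (Qi * Qi) * star V)) := by rw [M1]
      _ = Pd * Pd := by rw [hXY, Matrix.mul_one]
  -- entrywise extraction
  set w : (Fin n × Fin m) → (Fin n × Fin m) → ℝ := fun j k => Complex.normSq (V j k) with hwdef
  have hQdQd : Qd * Qd = Matrix.diagonal (fun k => ((q k ^ 2 : ℝ) : ℂ)) := by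
    rw [hQddef, Matrix.diagonal_mul_diagonal]
    exact diag_eq _ _ (fun k => by push_cast; ring)
  have hQiQi : Qi * Qi = Matrix.diagonal (fun k => (((q k ^ 2 : ℝ) : ℂ))⁻¹) := by
    rw [hQidef, Matrix.diagonal_mul_diagonal]
    exact diag_eq _ _ (fun k => by rw [← mul_inv]; push_cast; ring_nf)
  have entryD : ∀ (g : (Fin n × Fin m) → ℂ) (j : Fin n × Fin m),
      (V * Matrix.diagonal g * star V) j j = ∑ k, g k * ((Complex.normSq (V j k) : ℝ) : ℂ) := by
    intro g j
    rw [Matrix.mul_apply]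
    congr 1
    funext k
    rw [Matrix.mul_diagonal, Matrix.star_apply]
    rw [show V j k * g k * star (V j k) = g k * (V j k * (starRingEnd ℂ) (V j k)) by
      simp [Complex.star_def]; ring]
    rw [Complex.mul_conj]
  have E1 : ∀ j, ∑ k, q k ^ 2 * w j k = (p j)⁻¹ * (p j)⁻¹ := by
    intro j
    have h1 := congrFun (congrFun M1 j) j
    rw [hQdQd] at h1
    rw [entryD] at h1
    have h2 : (Pi' * Pi') j j = (((((p j)⁻¹ * (p j)⁻¹ : ℝ)) : ℂ)) := by
      rw [hPidef, Matrix.diagonal_mul_diagonal, Matrix.diagonal_apply_eq]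
      push_cast
      ring
    rw [h2] at h1
    have h3 : ((∑ k, q k ^ 2 * w j k : ℝ) : ℂ) = (((p j)⁻¹ * (p j)⁻¹ : ℝ) : ℂ) := by
      rw [← h1]
      push_cast
      rfl
    exact_mod_cast h3
  have E2 : ∀ j, ∑ k, (q k ^ 2)⁻¹ * w j k = p j * p j := by
    intro j
    have h1 := congrFun (congrFun M2 j) j
    rw [hQiQi] at h1
    rw [entryD] at h1
    have h2 : (Pd * Pd) j j = ((p j * p j : ℝ) : ℂ) := by
      rw [hPddef, Matrix.diagonal_mul_diagonal, Matrix.diagonal_apply_eq]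
      push_cast
      ring
    rw [h2] at h1
    have h3 : ((∑ k, (q k ^ 2)⁻¹ * w j k : ℝ) : ℂ) = ((p j * p j : ℝ) : ℂ) := by
      rw [← h1]
      push_cast
      rfl
    exact_mod_cast h3
  -- the key pointwise claim
  have key : ∀ j k, V j k ≠ 0 → p j * q k = 1 := by
    intro j k hVjk
    have hwpos : 0 < w j k := by
      rw [hwdef]
      exact Complex.normSq_pos.mpr hVjk
    have hS1 : ∑ k, (p j * q k) ^ 2 * w j k = 1 := by
      have := E1 j
      have h4 : ∑ k, (p j * q k) ^ 2 * w j k = (p j)^2 * ∑ k, q k ^ 2 * w j k := by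
        rw [Finset.mul_sum]
        congr 1; funext k; ring
      rw [h4, this]
      exact aux_inv1 (hppos j).ne'
    have hS2 : ∑ k, ((p j * q k) ^ 2)⁻¹ * w j k = 1 := by
      have := E2 j
      have h4 : ∑ k, ((p j * q k) ^ 2)⁻¹ * w j k = ((p j)^2)⁻¹ * ∑ k, (q k ^ 2)⁻¹ * w j k := by
        rw [Finset.mul_sum]
        congr 1; funext k
        rw [mul_pow, mul_inv]
        ring
      rw [h4, this]
      exact aux_inv2 (hppos j).ne'
    have hsum0 : ∑ k, ((p j * q k) ^ 2 + ((p j * q k) ^ 2)⁻¹ - 2) * w j k = 0 := by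
      have expand : ∀ k', ((p j * q k') ^ 2 + ((p j * q k') ^ 2)⁻¹ - 2) * w j k'
          = (p j * q k') ^ 2 * w j k' + ((p j * q k') ^ 2)⁻¹ * w j k' - 2 * w j k' := by
        intro k'; ring
      rw [Finset.sum_congr rfl (fun k' _ => expand k')]
      rw [Finset.sum_sub_distrib, Finset.sum_add_distrib, hS1, hS2, ← Finset.mul_sum]
      have hw1 : ∑ k', w j k' = 1 := by
        have h1 := congrFun (congrFun hV1 j) j
        rw [Matrix.mul_apply, Matrix.one_apply_eq] at h1
        have h2 : ∑ k', V j k' * star V k' j = ∑ k', ((w j k' : ℝ) : ℂ) := by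
          congr 1; funext k'
          rw [Matrix.star_apply, hwdef]
          exact Complex.mul_conj _
        rw [h2] at h1
        have h3 : ((∑ k', w j k' : ℝ) : ℂ) = ((1 : ℝ) : ℂ) := by
          push_cast
          exact h1
        exact_mod_cast h3
      rw [hw1]
      norm_num
    have hterm0 : ((p j * q k) ^ 2 + ((p j * q k) ^ 2)⁻¹ - 2) * w j k = 0 := by
      have hnonneg : ∀ k' ∈ Finset.univ, 0 ≤ ((p j * q k') ^ 2 + ((p j * q k') ^ 2)⁻¹ - 2) * w j k' := by
        intro k' _
        apply mul_nonneg
        · exact aux_amgm (pow_pos (mul_pos (hppos j) (hqpos k')) 2)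
        · exact Complex.normSq_nonneg _
      exact (Finset.sum_eq_zero_iff_of_nonneg hnonneg).mp hsum0 k (Finset.mem_univ k)
    have hfac : (p j * q k) ^ 2 + ((p j * q k) ^ 2)⁻¹ - 2 = 0 := by
      rcases mul_eq_zero.mp hterm0 with h' | h'
      · exact h'
      · exact absurd h' hwpos.ne'
    have ht1 : (p j * q k) ^ 2 = 1 :=
      aux_amgm_eq (pow_pos (mul_pos (hppos j) (hqpos k)) 2) hfac
    nlinarith [mul_pos (hppos j) (hqpos k)]
  refine ⟨key, ?_, ?_⟩
  · -- sqrt statement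
    have hS : (Matrix.diagonal (fun i : Fin n => ((Real.sqrt (c₁ i) : ℝ) : ℂ))
          ⊗ₖ Matrix.diagonal (fun i : Fin m => ((Real.sqrt (c₂ i) : ℝ) : ℂ)))
        = Matrix.diagonal (fun j : Fin n × Fin m => ((Real.sqrt (c₁ j.1) * Real.sqrt (c₂ j.2) : ℝ) : ℂ)) := by
      rw [Matrix.diagonal_kronecker_diagonal]
      exact diag_eq _ _ (fun i => by push_cast; ring)
    have hT : (Matrix.diagonal (fun i : Fin n => ((Real.sqrt (d₁ i) : ℝ) : ℂ))
          ⊗ₖ Matrix.diagonal (fun i : Fin m => ((Real.sqrt (d₂ i) : ℝ) : ℂ)))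
        = Matrix.diagonal (fun k : Fin n × Fin m => ((Real.sqrt (d₁ k.1) * Real.sqrt (d₂ k.2) : ℝ) : ℂ)) := by
      rw [Matrix.diagonal_kronecker_diagonal]
      exact diag_eq _ _ (fun i => by push_cast; ring)
    rw [hS, hT]
    ext j k
    rw [Matrix.mul_diagonal, Matrix.diagonal_mul]
    by_cases hVjk : V j k = 0
    · rw [hVjk]; ring
    · have hpq := key j k hVjk
      have hpq' : c₁ j.1 * c₂ j.2 * (d₁ k.1 * d₂ k.2) = 1 := hpq
      have hreal : Real.sqrt (c₁ j.1) * Real.sqrt (c₂ j.2) * (Real.sqrt (d₁ k.1) * Real.sqrt (d₂ k.2)) = 1 := by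
        rw [← Real.sqrt_mul (hc₁ j.1).le, ← Real.sqrt_mul (hd₁ k.1).le,
          ← Real.sqrt_mul (mul_pos (hc₁ j.1) (hc₂ j.2)).le]
        rw [hpq']
        exact Real.sqrt_one
      have : ((Real.sqrt (c₁ j.1) * Real.sqrt (c₂ j.2) : ℝ) : ℂ) * V j k
          * ((Real.sqrt (d₁ k.1) * Real.sqrt (d₂ k.2) : ℝ) : ℂ)
          = ((Real.sqrt (c₁ j.1) * Real.sqrt (c₂ j.2) * (Real.sqrt (d₁ k.1) * Real.sqrt (d₂ k.2)) : ℝ) : ℂ) * V j k := by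
        push_cast; ring
      rw [this, hreal]
      simp
  · -- U = V
    rw [hUP]
    ext j k
    rw [Matrix.mul_diagonal, Matrix.diagonal_mul]
    by_cases hVjk : V j k = 0
    · rw [hVjk]; ring
    · have hpq := key j k hVjk
      have h5 : ((p j : ℝ) : ℂ) * V j k * ((q k : ℝ) : ℂ) = ((p j * q k : ℝ) : ℂ) * V j k := by
        push_cast; ring
      rw [h5, hpq]
      simp
end

section
/- Let V be a unitary matrix and P, Q positive definite diagonal matrices such that V = P V Q. Then for every index pair (j,k) with V_{jk} ≠ 0, one has P_{jj} Q_{kk} = 1; hence V = P^t V Q^t for every real exponent t. -/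
open Matrix

theorem stmt_5 (n : ℕ) (V : Matrix (Fin n) (Fin n) ℂ)
    (hV : V ∈ Matrix.unitaryGroup (Fin n) ℂ)
    (p q : Fin n → ℝ) (hp : ∀ i, 0 < p i) (hq : ∀ i, 0 < q i)
    (h : V = Matrix.diagonal (fun i => (p i : ℂ)) * V * Matrix.diagonal (fun i => (q i : ℂ))) :
    (∀ j k, V j k ≠ 0 → p j * q k = 1) ∧
    ∀ t : ℝ, V = Matrix.diagonal (fun i => ((p i ^ t : ℝ) : ℂ)) * V *
        Matrix.diagonal (fun i => ((q i ^ t : ℝ) : ℂ)) := by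
  have key : ∀ j k, V j k ≠ 0 → p j * q k = 1 := by
    intro j k hjk
    have heq := congrFun (congrFun h j) k
    rw [Matrix.mul_diagonal, Matrix.diagonal_mul] at heq
    have h2 : ((p j * q k : ℝ) : ℂ) * V j k = ((1:ℝ) : ℂ) * V j k := by
      push_cast; linear_combination -heq
    exact_mod_cast mul_right_cancel₀ hjk h2
  refine ⟨key, fun t => ?_⟩
  ext j k
  simp only [Matrix.mul_diagonal, Matrix.diagonal_mul]
  by_cases hjk : V j k = 0
  · simp [hjk]
  · have h1 : p j ^ t * q k ^ t = 1 := by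
      rw [← Real.mul_rpow (hp j).le (hq k).le, key j k hjk, Real.one_rpow]
    have : ((p j ^ t : ℝ) : ℂ) * V j k * ((q k ^ t : ℝ) : ℂ)
        = ((p j ^ t * q k ^ t : ℝ) : ℂ) * V j k := by push_cast; ring
    rw [this, h1]
    simp
end

section
/- Let V = ∑_{i,j=1}^{n} |i⟩⟨j| ⊗ V_{ij} be a bipartite operator on ℂ^n ⊗ ℂ^{d_B} of Schmidt rank exactly n, and suppose for every i the blocks V_{i,1}, ..., V_{i,n} are linearly independent. Then there exists a unit vector (x,y) ∈ ℂ^2 such that the n matrices xV_{1,1}+yV_{2,1}, ..., xV_{1,n}+yV_{2,n} are linearly dependent. -/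
/-! The blocks `A j = V₀ⱼ` of the first row are independent and their span already has the
dimension `n` of the span of all blocks, so each `B j = V₁ⱼ` is a combination `∑ₖ Lₖⱼ A k`.
Over `ℂ` the matrix `L` has an eigenvector `v` with eigenvalue `μ`, which gives the relation
`∑ⱼ vⱼ (μ A j - B j) = 0`; rescaling `(μ, -1)` to a unit vector gives the claim. -/

open Finset

theorem Submodule.span_range_eq_of_linearIndependent_of_finrank_eq
    {K M ι κ : Type*} [Field K] [AddCommGroup M] [Module K M] [Fintype ι] [Finite κ]
    {v : κ → M} {w : ι → M} (hw : LinearIndependent K w) (hwv : ∀ i, w i ∈ span K (Set.range v))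
    (hrank : Module.finrank K (span K (Set.range v)) = Fintype.card ι) :
    span K (Set.range w) = span K (Set.range v) :=
  haveI := FiniteDimensional.span_of_finite K (Set.finite_range v)
  Submodule.eq_of_le_of_finrank_le (span_le.2 <| Set.range_subset_iff.2 hwv)
    (by rw [hrank, finrank_span_eq_card hw])

theorem exists_forall_not_linearIndependent_smul_add_smul
    {K M ι : Type*} [Field K] [IsAlgClosed K] [AddCommGroup M] [Module K M] [Fintype ι]
    [Nonempty ι] {A B : ι → M}
    (hA : LinearIndependent K A) (hB : ∀ j, B j ∈ Submodule.span K (Set.range A)) :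
    ∃ x y : K, y ≠ 0 ∧ ∀ c : K, ¬ LinearIndependent K (fun j => (c * x) • A j + (c * y) • B j) := by
  set f := Fintype.linearCombination K A
  set g := Fintype.linearCombination K B
  have hg : ∀ v, g v ∈ LinearMap.range f := fun v => by
    rw [Fintype.range_linearCombination, Fintype.linearCombination_apply]
    exact Submodule.sum_mem _ fun j _ => Submodule.smul_mem _ _ (hB j)
  -- `L` is the matrix of the `B j` in the basis `A`.
  set e := LinearEquiv.ofInjective f (linearIndependent_iff_injective_fintypeLinearCombination.1 hA)
  set L : Module.End K (ι → K) := e.symm.toLinearMap ∘ₗ g.codRestrict _ hg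
  have hfL : ∀ v, f (L v) = g v := fun v => congrArg Subtype.val (e.apply_symm_apply _)
  obtain ⟨μ, hμ⟩ := Module.End.exists_eigenvalue L
  obtain ⟨v, hv⟩ := hμ.exists_hasEigenvector
  have hrel : ∑ j, v j • (μ • A j - B j) = 0 := by
    have := hfL v
    rw [hv.apply_eq_smul, map_smul, Fintype.linearCombination_apply,
      Fintype.linearCombination_apply, smul_sum] at this
    simp only [smul_sub, sum_sub_distrib, smul_comm (v _) μ, this, sub_self]
  refine ⟨μ, -1, neg_ne_zero.2 one_ne_zero, fun c => ?_⟩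
  rw [Fintype.not_linearIndependent_iff]
  refine ⟨v, ?_, Function.ne_iff.1 hv.2⟩
  calc ∑ j, v j • ((c * μ) • A j + (c * -1) • B j) = c • ∑ j, v j • (μ • A j - B j) := by
        rw [smul_sum]
        exact sum_congr rfl fun j _ => by module
    _ = 0 := by rw [hrel, smul_zero]

theorem Complex.exists_norm_sq_mul_add_norm_sq_mul_eq_one (a : ℂ) {b : ℂ} (hb : b ≠ 0) :
    ∃ c : ℂ, ‖c * a‖ ^ 2 + ‖c * b‖ ^ 2 = 1 := by
  have hpos : 0 < ‖a‖ ^ 2 + ‖b‖ ^ 2 := by positivity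
  refine ⟨((√(‖a‖ ^ 2 + ‖b‖ ^ 2))⁻¹ : ℝ), ?_⟩
  simp only [norm_mul, Complex.norm_real, norm_inv, mul_pow, Real.norm_eq_abs, sq_abs, inv_pow,
    Real.sq_sqrt hpos.le]
  rw [← mul_add, inv_mul_cancel₀ hpos.ne']

theorem stmt_7 (n dB : ℕ) (hn : 2 ≤ n)
    (block : Fin n × Fin n → Matrix (Fin dB) (Fin dB) ℂ)
    (hrank : Module.finrank ℂ (Submodule.span ℂ (Set.range block)) = n)
    (hindep : ∀ i : Fin n, LinearIndependent ℂ (fun j : Fin n => block (i, j))) :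
    ∃ x y : ℂ, ‖x‖ ^ 2 + ‖y‖ ^ 2 = 1 ∧
      ¬ LinearIndependent ℂ
        (fun j : Fin n => x • block (⟨0, by omega⟩, j) + y • block (⟨1, by omega⟩, j)) := by
  have : Nonempty (Fin n) := ⟨⟨0, by omega⟩⟩
  have hspan := Submodule.span_range_eq_of_linearIndependent_of_finrank_eq (hindep ⟨0, by omega⟩)
    (fun j => Submodule.subset_span ⟨_, rfl⟩) (by rw [hrank, Fintype.card_fin])
  obtain ⟨x, y, hy, hxy⟩ := exists_forall_not_linearIndependent_smul_add_smul
    (hindep ⟨0, by omega⟩) (B := fun j => block (⟨1, by omega⟩, j)) fun j => by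
      rw [hspan]; exact Submodule.subset_span ⟨_, rfl⟩
  obtain ⟨c, hc⟩ := Complex.exists_norm_sq_mul_add_norm_sq_mul_eq_one x hy
  exact ⟨c * x, c * y, hc, hxy c⟩
end

section
/- Let U = ∑_{j=1}^{d_A} |α_j⟩⟨β_j| ⊗ W_j be a unitary on ℂ^{d_A} ⊗ ℂ^{d_B}, where |α_1⟩, ..., |α_{d_A}⟩ are linearly independent vectors in ℂ^{d_A}, |β_1⟩, ..., |β_{d_A}⟩ are linearly independent unit vectors in ℂ^{d_A}, and W_j are d_B × d_B matrices. Then each W_j is a nonzero scalar multiple of a unitary matrix. -/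
open Matrix Kronecker
open scoped ComplexOrder

/-!
Let `C` be the inverse of the matrix with columns `α k`, so that `C α_k = e_k`. Then
`(C ⊗ 1) U = ∑ₖ |e_k⟩⟨β_k| ⊗ W_k`, and since `U U† = 1` the `(j, j)` block of
`(C ⊗ 1)(C ⊗ 1)† = C C† ⊗ 1` is `⟨β_j|β_j⟩ W_j W_j† = W_j W_j†`. Hence `W_j W_j† = (C C†)_{jj} I`,
and `(C C†)_{jj} > 0` because `C C†` is positive definite, so `W_j / √(C C†)_{jj}` is unitary.
-/

theorem Matrix.exists_isUnit_mulVec_eq_single {K n : Type*} [Field K] [Fintype n] [DecidableEq n]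
    {α : n → n → K} (hα : LinearIndependent K α) :
    ∃ C : Matrix n n K, IsUnit C ∧ ∀ k, C *ᵥ α k = Pi.single k 1 := by
  set B : Matrix n n K := Matrix.of fun i k => α k i
  have hB : IsUnit B := linearIndependent_cols_iff_isUnit.mp hα
  refine ⟨B⁻¹, isUnit_nonsing_inv_iff.mpr hB, fun k => ?_⟩
  change B⁻¹ *ᵥ B.col k = _
  rw [← mulVec_single_one, mulVec_mulVec,
    nonsing_inv_mul B ((isUnit_iff_isUnit_det B).mp hB), one_mulVec]

theorem Matrix.exists_smul_mem_unitaryGroup_of_mul_conjTranspose_eq_smul_one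
    {𝕜 n : Type*} [RCLike 𝕜] [Fintype n] [DecidableEq n]
    {M : Matrix n n 𝕜} {r : 𝕜} (hr : 0 < r) (hM : M * Mᴴ = r • 1) :
    ∃ c : 𝕜, c ≠ 0 ∧ ∃ W ∈ unitaryGroup n 𝕜, M = c • W := by
  obtain ⟨x, hx, rfl⟩ := RCLike.pos_iff_exists_ofReal.mp hr
  set c : 𝕜 := ((√x : ℝ) : 𝕜)
  have hc : c ≠ 0 := RCLike.ofReal_ne_zero.mpr (Real.sqrt_pos.mpr hx).ne'
  have hcc : c * c = x := by
    rw [← RCLike.ofReal_mul, Real.mul_self_sqrt hx.le]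
  have hstar : star c = c := RCLike.conj_ofReal _
  clear_value c
  refine ⟨c, hc, c⁻¹ • M, ?_, by rw [smul_smul, mul_inv_cancel₀ hc, one_smul]⟩
  rw [mem_unitaryGroup_iff, star_eq_conjTranspose, conjTranspose_smul, Matrix.smul_mul,
    Matrix.mul_smul, hM, smul_smul, star_inv₀, hstar, ← hcc, ← mul_inv, smul_smul,
    inv_mul_cancel₀ (mul_ne_zero hc hc), one_smul]

theorem Matrix.sum_single_kronecker_apply {ι m n p R : Type*} [Fintype ι] [DecidableEq ι]
    [CommSemiring R] (v : ι → m → R) (W : ι → Matrix n p R) (j : ι) (b : n) (i : m) (c : p) :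
    (∑ k, vecMulVec (Pi.single k 1) (v k) ⊗ₖ W k) (j, b) (i, c) = v j i * W j b c := by
  simp [sum_apply, vecMulVec_apply, Pi.single_apply]

theorem Matrix.sum_single_kronecker_mul_conjTranspose_apply {ι m n p R : Type*}
    [Fintype ι] [DecidableEq ι] [Fintype m] [Fintype p] [CommSemiring R] [StarRing R]
    (v : ι → m → R) (W : ι → Matrix n p R) (j : ι) (b b' : n) :
    ((∑ k, vecMulVec (Pi.single k 1) (v k) ⊗ₖ W k) *
        (∑ k, vecMulVec (Pi.single k 1) (v k) ⊗ₖ W k)ᴴ) (j, b) (j, b') =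
      (v j ⬝ᵥ star (v j)) * (W j * (W j)ᴴ) b b' := by
  simp only [mul_apply, conjTranspose_apply, sum_single_kronecker_apply, Fintype.sum_prod_type,
    dotProduct, Finset.sum_mul_sum, star_mul', Pi.star_apply]
  exact Finset.sum_congr rfl fun _ _ => Finset.sum_congr rfl fun _ _ => by ring

theorem stmt_8_general (dA dB : ℕ)
    (α β : Fin dA → (Fin dA → ℂ))
    (hα : LinearIndependent ℂ α)
    (hβunit : ∀ j, dotProduct (star (β j)) (β j) = 1)
    (W : Fin dA → Matrix (Fin dB) (Fin dB) ℂ)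
    (U : Matrix (Fin dA × Fin dB) (Fin dA × Fin dB) ℂ)
    (hU : U ∈ Matrix.unitaryGroup (Fin dA × Fin dB) ℂ)
    (hexp : U = ∑ j, (Matrix.vecMulVec (α j) (star (β j))) ⊗ₖ W j) :
    ∀ j, ∃ c : ℂ, c ≠ 0 ∧ ∃ W' : Matrix (Fin dB) (Fin dB) ℂ,
      W' ∈ Matrix.unitaryGroup (Fin dB) ℂ ∧ W j = c • W' := by
  intro j
  obtain ⟨C, hC, hCα⟩ := exists_isUnit_mulVec_eq_single hα
  set T : Matrix (Fin dA × Fin dB) (Fin dA × Fin dB) ℂ := C ⊗ₖ 1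
  have hTU : T * U = ∑ k, vecMulVec (Pi.single k 1) (star (β k)) ⊗ₖ W k := by
    simp only [T, hexp, Finset.mul_sum, ← mul_kronecker_mul, Matrix.one_mul, mul_vecMulVec, hCα]
  have hTT : T * Tᴴ = (T * U) * (T * U)ᴴ := by
    have hUU : U * Uᴴ = 1 := mem_unitaryGroup_iff.mp hU
    rw [conjTranspose_mul, Matrix.mul_assoc, ← Matrix.mul_assoc U, hUU, Matrix.one_mul]
  have hWW : W j * (W j)ᴴ = (C * Cᴴ) j j • 1 := by
    ext b b'
    have hblock := congr_fun₂ hTT (j, b) (j, b')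
    rw [hTU, sum_single_kronecker_mul_conjTranspose_apply, star_star, hβunit,
      one_mul, conjTranspose_kronecker, conjTranspose_one, ← mul_kronecker_mul, Matrix.one_mul,
      kronecker_apply] at hblock
    rw [← hblock, Matrix.smul_apply, smul_eq_mul]
  have hpos : 0 < (C * Cᴴ) j j :=
    (PosDef.mul_conjTranspose_self C (vecMul_injective_iff_isUnit.mpr hC)).diag_pos
  exact exists_smul_mem_unitaryGroup_of_mul_conjTranspose_eq_smul_one hpos hWW

theorem stmt_8 (dA dB : ℕ)
    (α β : Fin dA → (Fin dA → ℂ))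
    (hα : LinearIndependent ℂ α) (hβ : LinearIndependent ℂ β)
    (hβunit : ∀ j, dotProduct (star (β j)) (β j) = 1)
    (W : Fin dA → Matrix (Fin dB) (Fin dB) ℂ)
    (U : Matrix (Fin dA × Fin dB) (Fin dA × Fin dB) ℂ)
    (hU : U ∈ Matrix.unitaryGroup (Fin dA × Fin dB) ℂ)
    (hexp : U = ∑ j, (Matrix.vecMulVec (α j) (star (β j))) ⊗ₖ W j) :
    ∀ j, ∃ c : ℂ, c ≠ 0 ∧ ∃ W' : Matrix (Fin dB) (Fin dB) ℂ,
      W' ∈ Matrix.unitaryGroup (Fin dB) ℂ ∧ W j = c • W' :=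
  stmt_8_general dA dB α β hα hβunit W U hU hexp
end

section
/- Let U = ∑_{j=1}^{r} A_j ⊗ B_j be a unitary of Schmidt rank r on ℂ^{d_A} ⊗ ℂ^{d_B}. If all products A_i A_j† (i,j = 1,...,r) are normal and pairwise commuting, and all products A_i† A_j are normal and pairwise commuting, then U is locally equivalent to a controlled unitary from the A side, i.e. there exist unitaries Q, R on ℂ^{d_A} such that (Q ⊗ I) U (R ⊗ I) = ∑_{k=1}^{d_A} |k⟩⟨k| ⊗ V_k with each V_k unitary. -/
/-!
The operators `A_i† A_j` form a commuting family closed under adjoints, so their self-adjoint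
parts commute and have a common orthonormal eigenbasis `v`. For `a ≠ b` the vectors `A_i v_a` and
`A_j v_b` are orthogonal, since `⟪A_i v_a, A_j v_b⟫ = ⟪v_a, A_i† A_j v_b⟫` is a multiple of
`⟪v_a, v_b⟫ = 0`; and normality of `A_j A_i†`, evaluated at `A_j v_a`, puts all the `A_j v_a` on
one line. Unit vectors `u_a` spanning these lines extend to an orthonormal basis `u`, and
`A_j v_a = d_j(a) u_a` is a simultaneous singular value decomposition `Q A_j R = diag d_j`. Hence
`(Q ⊗ 1) U (R ⊗ 1) = ∑_k |k⟩⟨k| ⊗ V_k` with `V_k = ∑_j d_j(k) B_j`, and the diagonal blocks `V_k`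
of this unitary matrix are unitary.
-/

open scoped ComplexStarModule

section

variable {A : Type*} [Ring A] [StarRing A] [Algebra ℂ A] [StarModule ℂ A] {a b : A}

lemma Commute.realPart_right (h : Commute a b) (h' : Commute a (star b)) :
    Commute a (ℜ b : A) := by
  rw [realPart_apply_coe]
  exact (h.add_right h').smul_right _

lemma Commute.imaginaryPart_right (h : Commute a b) (h' : Commute a (star b)) :
    Commute a (ℑ b : A) := by
  rw [imaginaryPart_apply_coe]
  exact ((h.sub_right h').smul_right _).smul_right _

end

namespace LinearMap.IsSymmetric

variable {𝕜 E : Type*} [RCLike 𝕜] [NormedAddCommGroup E] [InnerProductSpace 𝕜 E]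
  [FiniteDimensional 𝕜 E]

theorem exists_orthonormalBasis_forall_apply_eq_smul_of_commute {κ m : Type*} [Fintype m]
    (hm : Module.finrank 𝕜 E = Fintype.card m) {S : κ → Module.End 𝕜 E}
    (hS : ∀ k, (S k).IsSymmetric) (hcomm : ∀ k l, Commute (S k) (S l)) :
    ∃ b : OrthonormalBasis m 𝕜 E, ∀ a, ∃ χ : κ → 𝕜, ∀ k, S k (b a) = χ k • b a := by
  classical
  have hV := directSum_isInternal_of_pairwise_commute hS fun k l _ => hcomm k l
  let cb := hV.collectedBasis fun χ => (stdOrthonormalBasis 𝕜 _).toBasis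
  -- only finitely many joint eigenspaces are nonzero, as the collected basis of `E` shows
  let _ := @Fintype.ofFinite _ (Module.Finite.finite_basis cb)
  let ob := cb.toOrthonormalBasis <| by
    simpa [cb] using
      (orthogonalFamily_iInf_eigenspaces hS).orthonormal_sigma_orthonormal
        fun χ => (stdOrthonormalBasis 𝕜 _).orthonormal
  let e := Fintype.equivOfCardEq ((Module.finrank_eq_card_basis cb).symm.trans hm)
  refine ⟨ob.reindex e, fun a => ?_⟩
  obtain ⟨p, rfl⟩ := e.surjective a
  refine ⟨p.1, fun k => ?_⟩
  simp only [OrthonormalBasis.reindex_apply, Equiv.symm_apply_apply, ob,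
    Module.Basis.coe_toOrthonormalBasis]
  exact Module.End.mem_eigenspace_iff.mp ((Submodule.mem_iInf _).mp (hV.collectedBasis_mem _ p) k)

end LinearMap.IsSymmetric

namespace ContinuousLinearMap

variable {E : Type*} [NormedAddCommGroup E] [InnerProductSpace ℂ E] [FiniteDimensional ℂ E]

theorem exists_orthonormalBasis_forall_apply_eq_smul_of_commute {κ m : Type*} [Fintype m]
    (hm : Module.finrank ℂ E = Fintype.card m) {T : κ → E →L[ℂ] E}
    (hcomm : ∀ i j, Commute (T i) (T j)) (hstar : ∀ i, ∃ j, star (T i) = T j) :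
    ∃ b : OrthonormalBasis m ℂ E, ∀ a i, ∃ c : ℂ, T i (b a) = c • b a := by
  have hcomm_star (i j : κ) : Commute (T i) (star (T j)) := by
    obtain ⟨k, hk⟩ := hstar j
    exact hk ▸ hcomm i k
  let S : κ ⊕ κ → E →L[ℂ] E := Sum.elim (fun i => ℜ (T i)) (fun i => ℑ (T i))
  have hS (k : κ ⊕ κ) : IsSelfAdjoint (S k) := by
    cases k
    exacts [(ℜ _).prop, (ℑ _).prop]
  have hcomm_S (i : κ) (k : κ ⊕ κ) : Commute (T i) (S k) := by
    cases k
    exacts [(hcomm _ _).realPart_right (hcomm_star _ _),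
      (hcomm _ _).imaginaryPart_right (hcomm_star _ _)]
  have hcomm_star_S (i : κ) (k : κ ⊕ κ) : Commute (star (T i)) (S k) := by
    obtain ⟨j, hj⟩ := hstar i
    exact hj ▸ hcomm_S j k
  have hScomm (k l : κ ⊕ κ) : Commute (S k) (S l) := by
    cases k
    exacts [((hcomm_S _ l).symm.realPart_right (hcomm_star_S _ l).symm).symm,
      ((hcomm_S _ l).symm.imaginaryPart_right (hcomm_star_S _ l).symm).symm]
  obtain ⟨b, hb⟩ := LinearMap.IsSymmetric.exists_orthonormalBasis_forall_apply_eq_smul_of_commute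
    hm (S := fun k => S k) (fun k => (hS k).isSymmetric)
    fun k l => congrArg toLinearMap (hScomm k l).eq
  refine ⟨b, fun a i => ?_⟩
  obtain ⟨χ, hχ⟩ := hb a
  refine ⟨χ (.inl i) + Complex.I * χ (.inr i), ?_⟩
  conv_lhs => rw [← realPart_add_I_smul_imaginaryPart (T i)]
  rw [add_apply, smul_apply, add_smul, mul_smul]
  exact congrArg₂ (· + Complex.I • ·) (hχ (.inl i)) (hχ (.inr i))

variable {a b : E →L[ℂ] E} {x y : E}

lemma inner_apply_apply_eq_zero_of_star_mul_apply_eq_smul (hxy : inner ℂ x y = 0) {c : ℂ}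
    (hy : (star a * b) y = c • y) : inner ℂ (a x) (b y) = 0 := by
  rw [← adjoint_inner_right, ← star_eq_adjoint, ← mul_apply_eq_comp, hy, inner_smul_right, hxy,
    mul_zero]

lemma ne_zero_of_star_mul_self_apply_eq_smul {μ : ℂ} (h : (star a * a) x = μ • x)
    (ha : a x ≠ 0) : μ ≠ 0 := by
  rintro rfl
  refine ha ((inner_self_eq_zero (𝕜 := ℂ)).mp ?_)
  rw [← adjoint_inner_right, ← star_eq_adjoint, ← mul_apply_eq_comp, h, zero_smul,
    inner_zero_right]

lemma apply_mem_span_singleton_of_isStarNormal {μaa μbb μab : ℂ}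
    (haa : (star a * a) x = μaa • x) (hbb : (star b * b) x = μbb • x)
    (hab : (star a * b) x = μab • x) (hnormal : IsStarNormal (b * star a)) (ha : a x ≠ 0) :
    b x ∈ ℂ ∙ a x := by
  by_cases hb : b x = 0
  · simp [hb]
  have key : (μbb * μaa) • b x = (μab * μbb) • a x := by
    have h := congrArg (fun T : E →L[ℂ] E => T (b x)) hnormal.star_comm_self
    simp only [star_mul, star_star, mul_apply_eq_comp] at h haa hbb hab
    simp only [hab, hbb, haa, map_smul, smul_smul] at h
    exact h.symm
  have hμaa := ne_zero_of_star_mul_self_apply_eq_smul haa ha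
  have hμbb := ne_zero_of_star_mul_self_apply_eq_smul hbb hb
  refine Submodule.mem_span_singleton.mpr ⟨(μbb * μaa)⁻¹ * (μab * μbb), ?_⟩
  rw [mul_smul, ← key, smul_smul, inv_mul_cancel₀ (mul_ne_zero hμbb hμaa), one_smul]

variable {ι : Type*} {f : ι → E →L[ℂ] E}

lemma exists_mem_span_range_forall_apply_mem_span_singleton
    (hnormal : ∀ i j, IsStarNormal (f i * star (f j)))
    (hx : ∀ i j, ∃ c : ℂ, (star (f i) * f j) x = c • x) :
    ∃ w ∈ Submodule.span ℂ (Set.range fun i => f i x), (w = 0 ∨ ‖w‖ = 1) ∧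
      ∀ j, f j x ∈ ℂ ∙ w := by
  by_cases h : ∃ i, f i x ≠ 0
  · obtain ⟨i, hi⟩ := h
    refine ⟨(‖f i x‖⁻¹ : ℂ) • f i x, Submodule.smul_mem _ _ (Submodule.subset_span ⟨i, rfl⟩),
      .inr (norm_smul_inv_norm hi), fun j => ?_⟩
    rw [Submodule.span_singleton_smul_eq (by simpa using hi)]
    obtain ⟨μii, hii⟩ := hx i i
    obtain ⟨μjj, hjj⟩ := hx j j
    obtain ⟨μij, hij⟩ := hx i j
    exact apply_mem_span_singleton_of_isStarNormal hii hjj hij (hnormal j i) hi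
  · simp only [ne_eq, not_exists, not_not] at h
    exact ⟨0, zero_mem _, .inl rfl, fun j => by simp [h j]⟩

theorem exists_orthonormalBasis_pair_apply_eq_smul {m : Type*} [Fintype m]
    (hm : Module.finrank ℂ E = Fintype.card m) (hnormal : ∀ i j, IsStarNormal (f i * star (f j)))
    (hcomm : ∀ i j k l, Commute (star (f i) * f j) (star (f k) * f l)) :
    ∃ (v u : OrthonormalBasis m ℂ E) (d : ι → m → ℂ), ∀ j a, f j (v a) = d j a • u a := by
  obtain ⟨v, hv⟩ := exists_orthonormalBasis_forall_apply_eq_smul_of_commute hm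
    (T := fun p : ι × ι => star (f p.1) * f p.2) (fun p q => hcomm _ _ _ _)
    (fun p => ⟨(p.2, p.1), by simp [star_mul]⟩)
  choose w hwS hw hspan using fun a =>
    exists_mem_span_range_forall_apply_mem_span_singleton hnormal fun i j => hv a (i, j)
  have hortho : Orthonormal ℂ ({a | w a ≠ 0}.domRestrict w) := by
    refine ⟨fun a => (hw a).resolve_left a.2, fun a b hab => ?_⟩
    refine (Submodule.isOrtho_span.mpr ?_).inner_eq (hwS a) (hwS b)
    rintro _ ⟨i, rfl⟩ _ ⟨j, rfl⟩
    obtain ⟨c, hc⟩ := hv b (i, j)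
    exact inner_apply_apply_eq_zero_of_star_mul_apply_eq_smul
      (v.orthonormal.2 (Subtype.coe_injective.ne hab)) hc
  obtain ⟨u, hu⟩ := hortho.exists_orthonormalBasis_extension_of_card_eq hm
  have hmem (j : ι) (a : m) : f j (v a) ∈ ℂ ∙ u a := by
    by_cases ha : w a = 0
    · rw [show f j (v a) = 0 by simpa [ha] using hspan a j]
      exact zero_mem _
    · exact hu a ha ▸ hspan a j
  choose d hd using fun j a => Submodule.mem_span_singleton.mp (hmem j a)
  exact ⟨v, u, d, fun j a => (hd j a).symm⟩

end ContinuousLinearMap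

namespace Matrix

open Kronecker

theorem exists_unitary_mul_mul_eq_diagonal {m ι : Type*} [Fintype m] [DecidableEq m]
    (A : ι → Matrix m m ℂ) (hnormal : ∀ i j, IsStarNormal (A i * (A j)ᴴ))
    (hcomm : ∀ i j k l, Commute ((A i)ᴴ * A j) ((A k)ᴴ * A l)) :
    ∃ Q ∈ unitaryGroup m ℂ, ∃ R ∈ unitaryGroup m ℂ, ∃ d : ι → m → ℂ,
      ∀ j, Q * A j * R = diagonal (d j) := by
  let φ := toEuclideanCLM (n := m) (𝕜 := ℂ)
  have hf : ∀ i j, IsStarNormal (φ (A i) * star (φ (A j))) := by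
    intro i j
    have h := (hnormal i j).map φ
    rwa [map_mul, ← star_eq_conjTranspose, map_star] at h
  have hf' : ∀ i j k l, Commute (star (φ (A i)) * φ (A j)) (star (φ (A k)) * φ (A l)) := by
    intro i j k l
    have h := (hcomm i j k l).map φ
    rwa [map_mul, map_mul, ← star_eq_conjTranspose, ← star_eq_conjTranspose, map_star,
      map_star] at h
  obtain ⟨v, u, d, hd⟩ :=
    ContinuousLinearMap.exists_orthonormalBasis_pair_apply_eq_smul (m := m) (by simp) hf hf'
  let e := EuclideanSpace.basisFun m ℂ
  have hu := e.toMatrix_orthonormalBasis_mem_unitary u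
  refine ⟨star (e.toBasis.toMatrix u), Unitary.star_mem hu, e.toBasis.toMatrix v,
    e.toMatrix_orthonormalBasis_mem_unitary v, d, fun j => ?_⟩
  have hcol : A j * e.toBasis.toMatrix v = e.toBasis.toMatrix u * diagonal (d j) := by
    ext p a
    have := congrArg (fun y => y p) (hd j a)
    simp only [φ, ofLp_toEuclideanCLM, PiLp.smul_apply, smul_eq_mul] at this
    rw [mul_diagonal, mul_apply]
    simpa [Module.Basis.toMatrix_apply, e, mulVec, dotProduct, mul_comm] using this
  rw [mul_assoc, hcol, ← mul_assoc, mem_unitaryGroup_iff'.mp hu, one_mul]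

variable {m n α : Type*} [Fintype m] [DecidableEq m] [CommRing α]

lemma sum_single_kronecker_apply_s10 (V : m → Matrix n n α) (a a' : m) (b b' : n) :
    (∑ k, single k k 1 ⊗ₖ V k) (a, b) (a', b') = if a = a' then V a b b' else 0 := by
  rcases eq_or_ne a a' with rfl | h
  · simp [Matrix.sum_apply, single_apply]
  · simp [Matrix.sum_apply, single_apply, h]
    exact Finset.sum_eq_zero fun c _ => if_neg fun hc => h (hc.1.symm.trans hc.2)

lemma sum_diagonal_kronecker {ι : Type*} [Fintype ι] (d : ι → m → α) (B : ι → Matrix n n α) :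
    ∑ j, diagonal (d j) ⊗ₖ B j = ∑ k, single k k 1 ⊗ₖ ∑ j, d j k • B j := by
  ext ⟨a, b⟩ ⟨a', b'⟩
  rw [sum_single_kronecker_apply_s10]
  simp [Matrix.sum_apply, diagonal_apply]

variable [Fintype n] [DecidableEq n] [StarRing α]

lemma kronecker_mem_unitaryGroup {A : Matrix m m α} {B : Matrix n n α}
    (hA : A ∈ unitaryGroup m α) (hB : B ∈ unitaryGroup n α) :
    A ⊗ₖ B ∈ unitaryGroup (m × n) α := by
  rw [mem_unitaryGroup_iff'] at *
  rw [star_eq_conjTranspose, conjTranspose_kronecker, ← mul_kronecker_mul,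
    ← star_eq_conjTranspose, ← star_eq_conjTranspose, hA, hB, one_kronecker_one]

lemma mem_unitaryGroup_of_sum_single_kronecker_mem {V : m → Matrix n n α}
    (hV : ∑ k, single k k 1 ⊗ₖ V k ∈ unitaryGroup (m × n) α) (k : m) :
    V k ∈ unitaryGroup n α := by
  rw [mem_unitaryGroup_iff'] at hV ⊢
  ext b b'
  have := congr_fun₂ hV (k, b) (k, b')
  simp only [mul_apply, Fintype.sum_prod_type, star_apply, sum_single_kronecker_apply_s10] at this
  simpa [mul_apply, one_apply] using this

end Matrix

open Matrix Kronecker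

theorem stmt_10_general (dA dB r : ℕ)
    (U : Matrix (Fin dA × Fin dB) (Fin dA × Fin dB) ℂ)
    (hU : U ∈ Matrix.unitaryGroup (Fin dA × Fin dB) ℂ)
    (A : Fin r → Matrix (Fin dA) (Fin dA) ℂ)
    (B : Fin r → Matrix (Fin dB) (Fin dB) ℂ)
    (hexp : U = ∑ j, A j ⊗ₖ B j)
    (hnormal₁ : ∀ i j, (A i * (A j)ᴴ) * (A i * (A j)ᴴ)ᴴ = (A i * (A j)ᴴ)ᴴ * (A i * (A j)ᴴ))
    (hcomm₂ : ∀ i j k l, Commute ((A i)ᴴ * A j) ((A k)ᴴ * A l)) :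
    ∃ Q R : Matrix (Fin dA) (Fin dA) ℂ,
      Q ∈ Matrix.unitaryGroup (Fin dA) ℂ ∧ R ∈ Matrix.unitaryGroup (Fin dA) ℂ ∧
      ∃ V : Fin dA → Matrix (Fin dB) (Fin dB) ℂ,
        (∀ k, V k ∈ Matrix.unitaryGroup (Fin dB) ℂ) ∧
        (Q ⊗ₖ (1 : Matrix (Fin dB) (Fin dB) ℂ)) * U * (R ⊗ₖ (1 : Matrix (Fin dB) (Fin dB) ℂ))
          = ∑ k, Matrix.single k k (1 : ℂ) ⊗ₖ V k := by
  obtain ⟨Q, hQ, R, hR, d, hd⟩ :=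
    exists_unitary_mul_mul_eq_diagonal A (fun i j => ⟨(hnormal₁ i j).symm⟩) hcomm₂
  have hW : (Q ⊗ₖ (1 : Matrix (Fin dB) (Fin dB) ℂ)) * U * (R ⊗ₖ 1)
      = ∑ k, single k k 1 ⊗ₖ ∑ j, d j k • B j := by
    simp only [hexp, Finset.mul_sum, Finset.sum_mul, ← mul_kronecker_mul, one_mul, mul_one, hd]
    exact sum_diagonal_kronecker d B
  have hW_mem : (Q ⊗ₖ (1 : Matrix (Fin dB) (Fin dB) ℂ)) * U * (R ⊗ₖ 1) ∈ unitaryGroup _ ℂ :=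
    mul_mem (mul_mem (kronecker_mem_unitaryGroup hQ (one_mem _)) hU)
      (kronecker_mem_unitaryGroup hR (one_mem _))
  exact ⟨Q, R, hQ, hR, _, mem_unitaryGroup_of_sum_single_kronecker_mem (hW ▸ hW_mem), hW⟩

theorem stmt_10 (dA dB r : ℕ)
    (U : Matrix (Fin dA × Fin dB) (Fin dA × Fin dB) ℂ)
    (hU : U ∈ Matrix.unitaryGroup (Fin dA × Fin dB) ℂ)
    (A : Fin r → Matrix (Fin dA) (Fin dA) ℂ)
    (B : Fin r → Matrix (Fin dB) (Fin dB) ℂ)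
    (hA : LinearIndependent ℂ A) (hB : LinearIndependent ℂ B)
    (hexp : U = ∑ j, A j ⊗ₖ B j)
    (hmin : ∀ s : ℕ, s < r → ∀ (A' : Fin s → Matrix (Fin dA) (Fin dA) ℂ)
      (B' : Fin s → Matrix (Fin dB) (Fin dB) ℂ), U ≠ ∑ j, A' j ⊗ₖ B' j)
    (hnormal₁ : ∀ i j, (A i * (A j)ᴴ) * (A i * (A j)ᴴ)ᴴ = (A i * (A j)ᴴ)ᴴ * (A i * (A j)ᴴ))
    (hcomm₁ : ∀ i j k l, Commute (A i * (A j)ᴴ) (A k * (A l)ᴴ))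
    (hnormal₂ : ∀ i j, ((A i)ᴴ * A j) * ((A i)ᴴ * A j)ᴴ = ((A i)ᴴ * A j)ᴴ * ((A i)ᴴ * A j))
    (hcomm₂ : ∀ i j k l, Commute ((A i)ᴴ * A j) ((A k)ᴴ * A l)) :
    ∃ Q R : Matrix (Fin dA) (Fin dA) ℂ,
      Q ∈ Matrix.unitaryGroup (Fin dA) ℂ ∧ R ∈ Matrix.unitaryGroup (Fin dA) ℂ ∧
      ∃ V : Fin dA → Matrix (Fin dB) (Fin dB) ℂ,
        (∀ k, V k ∈ Matrix.unitaryGroup (Fin dB) ℂ) ∧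
        (Q ⊗ₖ (1 : Matrix (Fin dB) (Fin dB) ℂ)) * U * (R ⊗ₖ (1 : Matrix (Fin dB) (Fin dB) ℂ))
          = ∑ k, Matrix.single k k (1 : ℂ) ⊗ₖ V k :=
  stmt_10_general dA dB r U hU A B hexp hnormal₁ hcomm₂
end

section
/- Let B_3 = ∑_{i=1}^{k} c_i P_i where P_i are mutually orthogonal projectors summing to I_d and c_1 > c_2 > ... > c_k ≥ 0, and let B_1, B_2 be d × d matrices satisfying B_3† B_1 = B_2† B_3 and B_1 B_3† = B_3 B_2†. Then B_1 commutes with B_3², B_2 commutes with B_3², and consequently B_1 and B_2 are block-diagonal with respect to the decomposition induced by the projectors P_1, ..., P_k. -/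
open Matrix Finset

theorem stmt_12 (d k : ℕ) (c : Fin k → ℝ)
    (hc : ∀ i j : Fin k, i < j → c j < c i) (hc0 : ∀ i, 0 ≤ c i)
    (P : Fin k → Matrix (Fin d) (Fin d) ℂ)
    (hPherm : ∀ i, (P i)ᴴ = P i)
    (hPorth : ∀ i j, P i * P j = if i = j then P i else 0)
    (hPsum : ∑ i, P i = 1)
    (B₁ B₂ B₃ : Matrix (Fin d) (Fin d) ℂ)
    (hB₃ : B₃ = ∑ i, (c i : ℂ) • P i)
    (h1 : B₃ᴴ * B₁ = B₂ᴴ * B₃)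
    (h2 : B₁ * B₃ᴴ = B₃ * B₂ᴴ) :
    Commute B₁ (B₃ * B₃) ∧ Commute B₂ (B₃ * B₃) ∧
    ∀ i j : Fin k, i ≠ j → P i * B₁ * P j = 0 ∧ P i * B₂ * P j = 0 := by
  have hH : B₃ᴴ = B₃ := by
    rw [hB₃, conjTranspose_sum]
    refine Finset.sum_congr rfl fun i _ => ?_
    rw [conjTranspose_smul, hPherm]
    simp [Complex.star_def, Complex.conj_ofReal]
  rw [hH] at h1 h2
  -- h1 : B₃ * B₁ = B₂ᴴ * B₃, h2 : B₁ * B₃ = B₃ * B₂ᴴ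
  have hc1 : Commute B₁ (B₃ * B₃) := by
    show B₁ * (B₃ * B₃) = (B₃ * B₃) * B₁
    calc B₁ * (B₃ * B₃) = (B₁ * B₃) * B₃ := by rw [mul_assoc]
    _ = B₃ * (B₂ᴴ * B₃) := by rw [h2, mul_assoc]
    _ = B₃ * (B₃ * B₁) := by rw [← h1]
    _ = (B₃ * B₃) * B₁ := by rw [mul_assoc]
  have h1' : B₁ᴴ * B₃ = B₃ * B₂ := by
    have := congrArg conjTranspose h1
    simpa [conjTranspose_mul, hH] using this
  have h2' : B₃ * B₁ᴴ = B₂ * B₃ := by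
    have := congrArg conjTranspose h2
    simpa [conjTranspose_mul, hH] using this
  have hc2 : Commute B₂ (B₃ * B₃) := by
    show B₂ * (B₃ * B₃) = (B₃ * B₃) * B₂
    calc B₂ * (B₃ * B₃) = (B₂ * B₃) * B₃ := by rw [mul_assoc]
    _ = B₃ * (B₁ᴴ * B₃) := by rw [← h2', mul_assoc]
    _ = B₃ * (B₃ * B₂) := by rw [h1']
    _ = (B₃ * B₃) * B₂ := by rw [mul_assoc]
  refine ⟨hc1, hc2, fun i j hij => ?_⟩
  have hPB : ∀ i, P i * B₃ = (c i : ℂ) • P i := by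
    intro i
    rw [hB₃, Finset.mul_sum]
    rw [Finset.sum_eq_single i]
    · rw [mul_smul_comm, hPorth, if_pos rfl]
    · intro b _ hb
      rw [mul_smul_comm, hPorth, if_neg (Ne.symm hb), smul_zero]
    · simp
  have hBP : ∀ i, B₃ * P i = (c i : ℂ) • P i := by
    intro i
    rw [hB₃, Finset.sum_mul]
    rw [Finset.sum_eq_single i]
    · rw [smul_mul_assoc, hPorth, if_pos rfl]
    · intro b _ hb
      rw [smul_mul_assoc, hPorth, if_neg hb, smul_zero]
    · simp
  have hcne : (c i : ℂ)^2 - (c j : ℂ)^2 ≠ 0 := by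
    have : c i ≠ c j := by
      rcases lt_trichotomy i j with h | h | h
      · exact (hc i j h).ne'
      · exact absurd h hij
      · exact (hc j i h).ne
    have h2 : (c i)^2 ≠ (c j)^2 := by
      rcases lt_trichotomy i j with h | h | h
      · exact ne_of_gt (by nlinarith [hc i j h, hc0 i, hc0 j])
      · exact absurd h hij
      · exact ne_of_lt (by nlinarith [hc j i h, hc0 i, hc0 j])
    intro hcc
    apply h2
    have : ((c i)^2 : ℂ) = ((c j)^2 : ℂ) := by push_cast; linear_combination hcc
    exact_mod_cast this
  have key : ∀ M : Matrix (Fin d) (Fin d) ℂ, Commute M (B₃ * B₃) → P i * M * P j = 0 := by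
    intro M hcom
    have e1 : P i * (M * (B₃ * B₃)) * P j = (c j : ℂ)^2 • (P i * M * P j) := by
      calc P i * (M * (B₃ * B₃)) * P j = P i * M * (B₃ * (B₃ * P j)) := by
            simp only [mul_assoc]
      _ = (c j : ℂ)^2 • (P i * M * P j) := by
            rw [hBP, mul_smul_comm, hBP, smul_smul, ← mul_smul_comm, sq]
    have e2 : P i * ((B₃ * B₃) * M) * P j = (c i : ℂ)^2 • (P i * M * P j) := by
      calc P i * ((B₃ * B₃) * M) * P j = ((P i * B₃) * B₃) * M * P j := by
            simp only [mul_assoc]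
      _ = (c i : ℂ)^2 • (P i * M * P j) := by
            rw [hPB, smul_mul_assoc, hPB, smul_smul, smul_mul_assoc, smul_mul_assoc, sq]
    have heq : (c j : ℂ)^2 • (P i * M * P j) = (c i : ℂ)^2 • (P i * M * P j) := by
      rw [← e1, ← e2, hcom.eq]
    have : ((c i : ℂ)^2 - (c j : ℂ)^2) • (P i * M * P j) = 0 := by
      rw [sub_smul, heq, sub_self]
    rcases smul_eq_zero.mp this with h | h
    · exact absurd h hcne
    · exact h
  exact ⟨key B₁ hc1, key B₂ hc2⟩
end

section
/- The 3-dimensional subspace S of 4×4 diagonal matrices spanned by diag(1,0,0,0), diag(0,1,0,1/√2), and diag(0,0,1,1/√2) does not contain two linearly independent matrices of rank one. -/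
open Matrix

noncomputable def D1 : Matrix (Fin 4) (Fin 4) ℂ := Matrix.diagonal ![1, 0, 0, 0]
noncomputable def D2 : Matrix (Fin 4) (Fin 4) ℂ :=
  Matrix.diagonal ![0, 1, 0, ((Real.sqrt 2 : ℂ))⁻¹]
noncomputable def D3 : Matrix (Fin 4) (Fin 4) ℂ :=
  Matrix.diagonal ![0, 0, 1, ((Real.sqrt 2 : ℂ))⁻¹]

lemma sqrt2_ne : ((Real.sqrt 2 : ℂ))⁻¹ ≠ 0 := by
  simp only [ne_eq, inv_eq_zero]
  norm_cast
  positivity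

lemma combo (a b c : ℂ) :
    a • D1 + b • D2 + c • D3
      = Matrix.diagonal ![a, b, c, (b + c) * ((Real.sqrt 2 : ℂ))⁻¹] := by
  ext i j
  fin_cases i <;> fin_cases j <;>
    simp [D1, D2, D3, Matrix.add_apply, Matrix.smul_apply, Matrix.diagonal_apply, add_mul]

lemma key (M : Matrix (Fin 4) (Fin 4) ℂ)
    (hM : M ∈ Submodule.span ℂ ({D1, D2, D3} : Set (Matrix (Fin 4) (Fin 4) ℂ)))
    (hr : M.rank = 1) : ∃ a : ℂ, a ≠ 0 ∧ M = a • D1 := by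
  rw [show ({D1, D2, D3} : Set (Matrix (Fin 4) (Fin 4) ℂ)) = insert D1 (insert D2 {D3}) from rfl,
    Submodule.mem_span_insert] at hM
  obtain ⟨a, z, hz, rfl⟩ := hM
  rw [Submodule.mem_span_insert] at hz
  obtain ⟨b, z', hz', rfl⟩ := hz
  rw [Submodule.mem_span_singleton] at hz'
  obtain ⟨c, rfl⟩ := hz'
  have hM : a • D1 + b • D2 + c • D3
      = Matrix.diagonal ![a, b, c, (b + c) * ((Real.sqrt 2 : ℂ))⁻¹] := combo a b c
  rw [← add_assoc] at hr ⊢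
  set w : Fin 4 → ℂ := ![a, b, c, (b + c) * ((Real.sqrt 2 : ℂ))⁻¹] with hw
  rw [hM, Matrix.rank_diagonal] at hr
  have hsub : ∀ (i j : {i // w i ≠ 0}), i = j := by
    intro i j
    have := Fintype.card_le_one_iff.mp (le_of_eq hr)
    exact this i j
  have hb : b = 0 := by
    by_contra hb
    have h1 : w 1 ≠ 0 := by simpa [hw] using hb
    by_cases hbc : b + c = 0
    · have hc : c ≠ 0 := by intro h; apply hb; simpa [h] using hbc
      have h2 : w 2 ≠ 0 := by simpa [hw] using hc
      have := hsub ⟨1, h1⟩ ⟨2, h2⟩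
      simp at this
    · have h3 : w 3 ≠ 0 := by
        simp only [hw]
        show ¬ (b+c) * _ = 0
        exact mul_ne_zero hbc sqrt2_ne
      have := hsub ⟨1, h1⟩ ⟨3, h3⟩
      simp at this
  have hc : c = 0 := by
    by_contra hc
    have h2 : w 2 ≠ 0 := by simpa [hw] using hc
    have h3 : w 3 ≠ 0 := by
      simp only [hw]
      show ¬ (b+c) * _ = 0
      exact mul_ne_zero (by simpa [hb] using hc) sqrt2_ne
    have := hsub ⟨2, h2⟩ ⟨3, h3⟩
    simp at this
  refine ⟨a, ?_, by simp [hb, hc]⟩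
  intro ha
  have hz : ∀ i : Fin 4, w i = 0 := by
    intro i; fin_cases i <;> simp [hw, ha, hb, hc]
  have : IsEmpty {i // w i ≠ 0} := ⟨fun ⟨i, hi⟩ => hi (hz i)⟩
  rw [Fintype.card_eq_zero] at hr
  exact one_ne_zero hr.symm

theorem stmt_14 :
    ¬ ∃ M N : Matrix (Fin 4) (Fin 4) ℂ,
      M ∈ Submodule.span ℂ ({D1, D2, D3} : Set (Matrix (Fin 4) (Fin 4) ℂ)) ∧
      N ∈ Submodule.span ℂ ({D1, D2, D3} : Set (Matrix (Fin 4) (Fin 4) ℂ)) ∧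
      M.rank = 1 ∧ N.rank = 1 ∧ LinearIndependent ℂ ![M, N] := by
  rintro ⟨M, N, hM, hN, hrM, hrN, hli⟩
  obtain ⟨a, ha, rfl⟩ := key M hM hrM
  obtain ⟨b, hb, rfl⟩ := key N hN hrN
  rw [linearIndependent_fin2] at hli
  obtain ⟨-, h⟩ := hli
  apply h (a / b)
  simp only [Matrix.cons_val_one, Matrix.head_cons, Matrix.cons_val_zero, smul_smul]
  rw [div_mul_cancel₀ _ hb]
end
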